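/- For every m ≥ 2 there exist 2m symplectic simplices B₁⁺, B₁⁻, …, B_m⁺, B_m⁻ in ℙ(ℝ^{2n}) such that B ⊆ B′* for all distinct B, B′ among them. -/

import Mathlib

open LinearAlgebra.Projectivization Projectivization

/-- The quotient topology on projective space. -/
noncomputable instance (n : ℕ) : TopologicalSpace (Projectivization ℝ (Fin n → ℝ)) :=
  instTopologicalSpaceQuotient

/-- The standard symplectic form `ω(v,v′) = Σᵢ (−1)ⁱ vᵢ v′_{2n+1−i}` on `ℝ^{2n}`
(0-indexed version). -/
def symplForm (n : ℕ) (v w : Fin (2 * n) → ℝ) : ℝ :=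
  ∑ j : Fin (2 * n), (-1 : ℝ) ^ ((j : ℕ) + 1) * v j * w (Fin.rev j)

/-- A symplectic basis of `ℝ^{2n}`: a basis in which the matrix of `ω` is antidiagonal
with alternating entries `±1` (normalized so that the canonical basis is symplectic). -/
def IsSymplecticBasis (n : ℕ) (e : Fin (2 * n) → (Fin (2 * n) → ℝ)) : Prop :=
  LinearIndependent ℝ e ∧ Submodule.span ℝ (Set.range e) = ⊤ ∧
    ∀ i j : Fin (2 * n), symplForm n (e i) (e j)
      = if j = Fin.rev i then (-1 : ℝ) ^ ((i : ℕ) + 1) else 0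

/-- The open symplectic simplex `B = ℙ(ℝ_{>0}-span(e₁,…,e_{2n}))` in `ℙ(ℝ^{2n})`
associated to a symplectic basis `e`. -/
def symplSimplex (n : ℕ) (e : Fin (2 * n) → (Fin (2 * n) → ℝ)) :
    Set (Projectivization ℝ (Fin (2 * n) → ℝ)) :=
  {P | ∃ (v : Fin (2 * n) → ℝ) (hv : v ≠ 0),
    (∃ c : Fin (2 * n) → ℝ, (∀ i, 0 < c i) ∧ v = ∑ i, c i • e i) ∧
    P = Projectivization.mk ℝ v hv}

/-- The dual `B* = {[v] : ℙ(v^⊥) ∩ cl(B) = ∅}` of a subset `B` of `ℙ(ℝ^{2n})`, where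
`v^⊥` is the `ω`-orthogonal hyperplane of `v`. -/
def symplDual (n : ℕ) (B : Set (Projectivization ℝ (Fin (2 * n) → ℝ))) :
    Set (Projectivization ℝ (Fin (2 * n) → ℝ)) :=
  {P | ∃ (v : Fin (2 * n) → ℝ) (hv : v ≠ 0), P = Projectivization.mk ℝ v hv ∧
    ∀ Q ∈ closure B, ∀ (w : Fin (2 * n) → ℝ) (hw : w ≠ 0),
      Q = Projectivization.mk ℝ w hw → symplForm n v w ≠ 0}

/-!
`ℝ^{2n}` is the `ω`-orthogonal sum of the planes spanned by the coordinate vectors with indices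
`j` and `2n - 1 - j`; in suitably signed coordinates `ω` restricted to such a plane is the
determinant, so vectors at angles `α` and `β` in one plane pair to `sin (β - α)`. The `t`-th basis
puts the two basis vectors of every plane at the angles `2tε` and `2tε + ε`. For `s < t < 2m` and
`ε = π / (4m)` all pairings between the `s`-th and the `t`-th basis are then sines of angles in
`(0, π)` (same plane) or zero (different planes), so `ω(v, w) > 0` whenever `v` has positive
coordinates in the `s`-th basis and `w ≠ 0` nonnegative ones in the `t`-th basis; up to sign, such
`w` represent the closure of the `t`-th simplex. Distinctness follows since `ω(v, v) = 0`.
-/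

lemma LinearMap.BilinForm.sum_smul_sum_smul_pos {ι V : Type*} [Fintype ι] [AddCommGroup V]
    [Module ℝ V] (B : LinearMap.BilinForm ℝ V) {e e' : ι → V}
    (hnonneg : ∀ i k, 0 ≤ B (e i) (e' k)) (hdiag : ∀ k, 0 < B (e k) (e' k))
    {c d : ι → ℝ} (hc : ∀ i, 0 ≤ c i) (hd : ∀ k, 0 ≤ d k) {k₀ : ι}
    (hck₀ : 0 < c k₀) (hdk₀ : 0 < d k₀) :
    0 < B (∑ i, c i • e i) (∑ k, d k • e' k) := by
  simp only [map_sum, map_smul, LinearMap.sum_apply, LinearMap.smul_apply, smul_eq_mul]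
  have hterm : ∀ i k, 0 ≤ c i * B (e i) (e' k) := fun i k => mul_nonneg (hc i) (hnonneg i k)
  refine Finset.sum_pos' (fun k _ => mul_nonneg (hd k) (Finset.sum_nonneg fun i _ => hterm i k))
    ⟨k₀, Finset.mem_univ _, mul_pos hdk₀ ?_⟩
  exact Finset.sum_pos' (fun i _ => hterm i k₀)
    ⟨k₀, Finset.mem_univ _, mul_pos hck₀ (hdiag k₀)⟩

lemma isClosed_setOf_forall_mk_mem {k : ℕ} {S : Set (Fin k → ℝ)} (hS : IsClosed S) :
    IsClosed {P : Projectivization ℝ (Fin k → ℝ) |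
      ∀ (w : Fin k → ℝ) (hw : w ≠ 0), P = mk ℝ w hw → w ∈ S} := by
  have hq : Topology.IsQuotientMap
      (fun x : {v : Fin k → ℝ // v ≠ 0} => mk ℝ x.1 x.2) := isQuotientMap_quotient_mk'
  refine hq.isClosed_preimage.mp ?_
  have hpre : (fun x : {v : Fin k → ℝ // v ≠ 0} => mk ℝ x.1 x.2) ⁻¹'
      {P | ∀ (w : Fin k → ℝ) (hw : w ≠ 0), P = mk ℝ w hw → w ∈ S}
      = ⋂ a : ℝˣ, {x | a • x.1 ∈ S} := by
    ext x
    simp only [Set.mem_preimage, Set.mem_ofPred_eq, Set.mem_iInter]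
    constructor
    · intro h a
      exact h _ ((smul_ne_zero_iff_ne a).2 x.2)
        ((mk_eq_mk_iff _ _ _ _ _).2 ⟨a⁻¹, inv_smul_smul a _⟩)
    · rintro h w hw hx
      obtain ⟨a, ha⟩ := (mk_eq_mk_iff _ _ _ x.2 hw).1 hx
      simpa [← ha] using h a⁻¹
  rw [hpre]
  exact isClosed_iInter fun a => hS.preimage ((continuous_const_smul _).comp continuous_subtype_val)

section

variable {n : ℕ}

noncomputable def symplBilin (n : ℕ) : LinearMap.BilinForm ℝ (Fin (2 * n) → ℝ) :=
  LinearMap.mk₂ ℝ (symplForm n)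
    (fun v v' w => by
      simp only [symplForm, Pi.add_apply, ← Finset.sum_add_distrib]
      exact Finset.sum_congr rfl fun j _ => by ring)
    (fun a v w => by
      simp only [symplForm, Pi.smul_apply, smul_eq_mul, Finset.mul_sum]
      exact Finset.sum_congr rfl fun j _ => by ring)
    (fun v w w' => by
      simp only [symplForm, Pi.add_apply, ← Finset.sum_add_distrib]
      exact Finset.sum_congr rfl fun j _ => by ring)
    (fun a v w => by
      simp only [symplForm, Pi.smul_apply, smul_eq_mul, Finset.mul_sum]
      exact Finset.sum_congr rfl fun j _ => by ring)

@[simp]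
lemma symplBilin_apply (v w : Fin (2 * n) → ℝ) : symplBilin n v w = symplForm n v w := rfl

lemma symplForm_smul_right (v w : Fin (2 * n) → ℝ) (a : ℝ) :
    symplForm n v (a • w) = a * symplForm n v w :=
  (symplBilin n v).map_smul a w

lemma neg_one_pow_val_rev_succ (j : Fin (2 * n)) :
    (-1 : ℝ) ^ ((Fin.rev j : ℕ) + 1) = -(-1) ^ ((j : ℕ) + 1) := by
  have hsum : (Fin.rev j : ℕ) + 1 + ((j : ℕ) + 1) = 2 * n + 1 := by
    rw [Fin.val_rev]; omega
  have h1 : (-1 : ℝ) ^ ((Fin.rev j : ℕ) + 1) * (-1) ^ ((j : ℕ) + 1) = -1 := by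
    rw [← pow_add, hsum, pow_succ, pow_mul]; simp
  have h2 : (-1 : ℝ) ^ ((j : ℕ) + 1) * (-1) ^ ((j : ℕ) + 1) = 1 := by
    rw [← pow_add, ← two_mul, pow_mul]; simp
  linear_combination (-1 : ℝ) ^ ((j : ℕ) + 1) * h1 - (-1 : ℝ) ^ ((Fin.rev j : ℕ) + 1) * h2

lemma symplForm_single_single (i k : Fin (2 * n)) (a b : ℝ) :
    symplForm n (Pi.single i a) (Pi.single k b)
      = if k = Fin.rev i then (-1) ^ ((i : ℕ) + 1) * a * b else 0 := by
  rw [symplForm, Finset.sum_eq_single i]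
  · split_ifs with h
    · subst h; simp
    · simp [Ne.symm h]
  · intro j _ hj; simp [hj]
  · simp

lemma symplForm_self (v : Fin (2 * n) → ℝ) : symplForm n v v = 0 := by
  have h : symplForm n v v = -symplForm n v v := by
    conv_lhs => rw [symplForm, ← Equiv.sum_comp Fin.revPerm]
    simp only [symplForm, Fin.revPerm_apply, Fin.rev_rev, neg_one_pow_val_rev_succ,
      ← Finset.sum_neg_distrib]
    exact Finset.sum_congr rfl fun j _ => by ring
  linarith

lemma symplForm_swap (v w : Fin (2 * n) → ℝ) : symplForm n v w = -symplForm n w v :=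
  (LinearMap.IsAlt.neg (B := symplBilin n) symplForm_self w v).symm

lemma disjoint_symplDual_closure (B : Set (Projectivization ℝ (Fin (2 * n) → ℝ))) :
    Disjoint (symplDual n B) (closure B) :=
  Set.disjoint_left.2 fun P ⟨v, hv, hP, h⟩ hcl => h P hcl v hv hP (symplForm_self v)

lemma symplSimplex_nonempty (hn : 0 < n) {e : Fin (2 * n) → Fin (2 * n) → ℝ}
    (he : LinearIndependent ℝ e) : (symplSimplex n e).Nonempty := by
  have hv : ∑ i, (fun _ => (1 : ℝ)) i • e i ≠ 0 := fun h0 =>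
    one_ne_zero (Fintype.linearIndependent_iff.1 he _ h0 ⟨0, by omega⟩)
  exact ⟨_, _, hv, ⟨_, fun _ => one_pos, rfl⟩, rfl⟩

lemma symplSimplex_ne_of_subset_symplDual {e e' : Fin (2 * n) → Fin (2 * n) → ℝ}
    (hne : (symplSimplex n e).Nonempty)
    (h : symplSimplex n e ⊆ symplDual n (symplSimplex n e')) :
    symplSimplex n e ≠ symplSimplex n e' := by
  intro heq
  obtain ⟨P, hP⟩ := hne
  exact Set.disjoint_left.1 (disjoint_symplDual_closure _) (h hP) (heq ▸ subset_closure hP)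

lemma isSymplecticBasis_of_symplForm {e : Fin (2 * n) → Fin (2 * n) → ℝ}
    (h : ∀ i j, symplForm n (e i) (e j) = if j = Fin.rev i then (-1 : ℝ) ^ ((i : ℕ) + 1) else 0) :
    IsSymplecticBasis n e := by
  have hli : LinearIndependent ℝ e := by
    rw [Fintype.linearIndependent_iff]
    intro g hg i
    have h0 : symplForm n (∑ k, g k • e k) (e i.rev) = g i * (-1) ^ ((i : ℕ) + 1) := by
      simp only [← symplBilin_apply, map_sum, map_smul, LinearMap.sum_apply, LinearMap.smul_apply,
        smul_eq_mul]
      simp [h, Fin.rev_inj]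
    rw [hg] at h0
    simpa [symplForm] using h0.symm
  refine ⟨hli, hli.span_eq_top_of_card_eq_finrank' (by simp), h⟩

lemma symplSimplex_subset_symplDual {e e' : Fin (2 * n) → Fin (2 * n) → ℝ}
    (he' : LinearIndependent ℝ e') (hspan : Submodule.span ℝ (Set.range e') = ⊤)
    (h : ∀ c d : Fin (2 * n) → ℝ, (∀ i, 0 < c i) → (∀ k, 0 ≤ d k) → (∃ k, 0 < d k) →
      symplForm n (∑ i, c i • e i) (∑ k, d k • e' k) ≠ 0) :
    symplSimplex n e ⊆ symplDual n (symplSimplex n e') := by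
  obtain ⟨b, rfl⟩ : ∃ b : Module.Basis (Fin (2 * n)) ℝ (Fin (2 * n) → ℝ), ⇑b = e' :=
    ⟨Module.Basis.mk he' hspan.ge, Module.Basis.coe_mk _ _⟩
  -- the representatives of points of `cl(B)` have all their coordinates of one sign
  set S : Set (Fin (2 * n) → ℝ) := {w | ∀ k l, 0 ≤ b.repr w k * b.repr w l}
  have hS : IsClosed S := by
    have hcoord (k : Fin (2 * n)) : Continuous fun w => b.repr w k :=
      (b.coord k).continuous_of_finiteDimensional
    simp only [S, Set.ofPred_forall]
    exact isClosed_iInter fun k => isClosed_iInter fun l =>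
      isClosed_le continuous_const ((hcoord k).mul (hcoord l))
  have hclosure : closure (symplSimplex n b) ⊆
      {Q | ∀ (w : Fin (2 * n) → ℝ) (hw : w ≠ 0), Q = mk ℝ w hw → w ∈ S} := by
    refine closure_minimal ?_ (isClosed_setOf_forall_mk_mem hS)
    rintro _ ⟨v, hv, ⟨c, hc, rfl⟩, rfl⟩ w hw hvw
    obtain ⟨a, rfl⟩ := (mk_eq_mk_iff _ _ _ _ _).1 hvw.symm
    intro k l
    simp only [Units.smul_def, map_smul, Finsupp.smul_apply, b.repr_sum_self, smul_eq_mul]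
    nlinarith [mul_pos (hc k) (hc l), mul_self_nonneg (a : ℝ)]
  rintro _ ⟨v, hv, ⟨c, hc, rfl⟩, rfl⟩
  refine ⟨_, hv, rfl, fun Q hQ w hw hQw => ?_⟩
  have hwS := hclosure hQ w hw hQw
  obtain ⟨l, hl⟩ : ∃ l, b.repr w l ≠ 0 := by
    by_contra! h0
    exact hw (b.forall_coord_eq_zero_iff.1 h0)
  have hsum : ∑ k, (b.repr w l * b.repr w k) • b k = b.repr w l • w := by
    simp only [← smul_smul, ← Finset.smul_sum, b.sum_repr]
  have hne := h c _ hc (hwS l) ⟨l, mul_self_pos.2 hl⟩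
  rw [hsum, symplForm_smul_right] at hne
  exact right_ne_zero_of_mul hne

lemma Fin.rev_ne_self_of_two_mul (j : Fin (2 * n)) : j.rev ≠ j := by
  intro h
  have := congrArg Fin.val h
  rw [Fin.val_rev] at this
  omega

lemma odd_val_rev_iff (i : Fin (2 * n)) : Odd (i.rev : ℕ) ↔ ¬Odd (i : ℕ) := by
  have := i.isLt
  rw [Fin.val_rev, Nat.odd_sub (by omega)]
  simp [Nat.even_add_one, Nat.odd_mul, Nat.not_odd_iff_even, (by decide : ¬Odd 2)]

def planeOf (i : Fin (2 * n)) : Fin (2 * n) := if (i : ℕ) < n then i else i.rev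

lemma val_planeOf_lt (i : Fin (2 * n)) : (planeOf i : ℕ) < n := by
  unfold planeOf
  split_ifs with h
  · exact h
  · rw [Fin.val_rev]; omega

lemma planeOf_eq_planeOf_iff {i k : Fin (2 * n)} : planeOf i = planeOf k ↔ k = i ∨ k = i.rev := by
  have := i.isLt
  have := k.isLt
  unfold planeOf
  split_ifs <;> simp only [Fin.ext_iff, Fin.val_rev] <;> omega

noncomputable def planeVec (j : Fin (2 * n)) (θ : ℝ) : Fin (2 * n) → ℝ :=
  Pi.single j (Real.cos θ) + Pi.single j.rev ((-1) ^ ((j : ℕ) + 1) * Real.sin θ)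

lemma symplForm_planeVec_planeVec (j : Fin (2 * n)) (α β : ℝ) :
    symplForm n (planeVec j α) (planeVec j β) = Real.sin (β - α) := by
  simp only [planeVec, ← symplBilin_apply, map_add, LinearMap.add_apply]
  simp only [symplBilin_apply, symplForm_single_single, Fin.rev_rev, Fin.rev_ne_self_of_two_mul,
    (Fin.rev_ne_self_of_two_mul j).symm, if_true, if_false, neg_one_pow_val_rev_succ, Real.sin_sub]
  have hσ : ((-1 : ℝ) ^ ((j : ℕ) + 1)) ^ 2 = 1 := by rw [← pow_mul, mul_comm, pow_mul]; simp
  linear_combination (Real.sin β * Real.cos α - Real.cos β * Real.sin α) * hσ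

lemma symplForm_planeVec_of_ne {j j' : Fin (2 * n)} (h : j' ≠ j) (h' : j' ≠ j.rev) (α β : ℝ) :
    symplForm n (planeVec j α) (planeVec j' β) = 0 := by
  simp only [planeVec, ← symplBilin_apply, map_add, LinearMap.add_apply]
  simp [symplForm_single_single, h, h', Fin.rev_eq_iff]

/-- Of the two indices `i`, `i.rev` of a plane the odd one gets the smaller angle: this gives
`ω(e i, e i.rev) = (-1) ^ (i + 1)`, the sign that `IsSymplecticBasis` prescribes. -/
def parityPhase (ε : ℝ) (i : Fin (2 * n)) : ℝ := if Odd (i : ℕ) then 0 else ε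

noncomputable def rotatedBasis (ε : ℝ) (t : ℕ) (i : Fin (2 * n)) : Fin (2 * n) → ℝ :=
  (√(Real.sin ε))⁻¹ • planeVec (planeOf i) (2 * t * ε + parityPhase ε i)

lemma symplForm_rotatedBasis {ε : ℝ} (hε : 0 ≤ Real.sin ε) (s t : ℕ) (i k : Fin (2 * n)) :
    symplForm n (rotatedBasis ε s i) (rotatedBasis ε t k)
      = if planeOf i = planeOf k then
          Real.sin (2 * t * ε + parityPhase ε k - (2 * s * ε + parityPhase ε i)) / Real.sin ε
        else 0 := by
  have hsqrt : (√(Real.sin ε))⁻¹ * (√(Real.sin ε))⁻¹ = (Real.sin ε)⁻¹ := by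
    rw [← mul_inv, Real.mul_self_sqrt hε]
  simp only [rotatedBasis, ← symplBilin_apply, map_smul, LinearMap.smul_apply, smul_eq_mul]
  simp only [symplBilin_apply]
  split_ifs with h
  · rw [h, symplForm_planeVec_planeVec, ← mul_assoc, hsqrt, inv_mul_eq_div]
  · have h' : planeOf k ≠ (planeOf i).rev := by
      intro h'
      have := val_planeOf_lt k
      have := val_planeOf_lt i
      rw [h', Fin.val_rev] at *
      omega
    rw [symplForm_planeVec_of_ne (Ne.symm h) h']
    simp

lemma isSymplecticBasis_rotatedBasis {ε : ℝ} (hε : 0 < Real.sin ε) (t : ℕ) :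
    IsSymplecticBasis n (rotatedBasis ε t) := by
  refine isSymplecticBasis_of_symplForm fun i k => ?_
  rw [symplForm_rotatedBasis hε.le, add_sub_add_left_eq_sub]
  by_cases h : planeOf i = planeOf k
  · rw [if_pos h]
    rcases planeOf_eq_planeOf_iff.1 h with rfl | rfl
    · rw [if_neg (Fin.rev_ne_self_of_two_mul k).symm, sub_self, Real.sin_zero, zero_div]
    · rw [if_pos rfl]
      by_cases hi : Odd (i : ℕ)
      · have hrev : ¬Odd (i.rev : ℕ) := by rw [odd_val_rev_iff]; exact not_not.2 hi
        rw [parityPhase, parityPhase, if_pos hi, if_neg hrev, sub_zero, div_self hε.ne',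
          hi.add_one.neg_one_pow]
      · have hrev : Odd (i.rev : ℕ) := (odd_val_rev_iff i).2 hi
        rw [parityPhase, parityPhase, if_neg hi, if_pos hrev, zero_sub, Real.sin_neg,
          neg_div, div_self hε.ne', (Nat.not_odd_iff_even.1 hi).add_one.neg_one_pow]
  · rw [if_neg h, if_neg]
    rintro rfl
    exact h (planeOf_eq_planeOf_iff.2 (Or.inr rfl))

lemma symplForm_rotatedBasis_pos {ε : ℝ} (hε : 0 < ε) {s t : ℕ} (hst : s < t)
    (hπ : (2 * ((t : ℝ) - s) + 1) * ε < Real.pi) {i k : Fin (2 * n)} (h : planeOf i = planeOf k) :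
    0 < symplForm n (rotatedBasis ε s i) (rotatedBasis ε t k) := by
  have hst' : (s : ℝ) + 1 ≤ t := by exact_mod_cast hst
  have hsin : 0 < Real.sin ε := Real.sin_pos_of_pos_of_lt_pi hε (by nlinarith)
  have hphase (j : Fin (2 * n)) : 0 ≤ parityPhase ε j ∧ parityPhase ε j ≤ ε := by
    unfold parityPhase; split_ifs <;> constructor <;> linarith
  rw [symplForm_rotatedBasis hsin.le, if_pos h]
  refine div_pos (Real.sin_pos_of_pos_of_lt_pi ?_ ?_) hsin
  · nlinarith [hphase i, hphase k]
  · nlinarith [hphase i, hphase k]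

lemma symplForm_sum_rotatedBasis_pos {ε : ℝ} (hε : 0 < ε) {s t : ℕ} (hst : s < t)
    (hπ : (2 * ((t : ℝ) - s) + 1) * ε < Real.pi) {c d : Fin (2 * n) → ℝ} (hc : ∀ i, 0 ≤ c i)
    (hd : ∀ k, 0 ≤ d k) {k₀ : Fin (2 * n)} (hck₀ : 0 < c k₀) (hdk₀ : 0 < d k₀) :
    0 < symplForm n (∑ i, c i • rotatedBasis ε s i) (∑ k, d k • rotatedBasis ε t k) := by
  have hst' : (s : ℝ) + 1 ≤ t := by exact_mod_cast hst
  have hsin : 0 ≤ Real.sin ε := Real.sin_nonneg_of_nonneg_of_le_pi hε.le (by nlinarith)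
  refine (symplBilin n).sum_smul_sum_smul_pos (fun i k => ?_)
    (fun k => symplForm_rotatedBasis_pos hε hst hπ rfl) hc hd hck₀ hdk₀
  by_cases h : planeOf i = planeOf k
  · exact (symplForm_rotatedBasis_pos hε hst hπ h).le
  · simp [symplForm_rotatedBasis hsin, h]

lemma symplSimplex_rotatedBasis_subset_symplDual {ε : ℝ} (hε : 0 < ε) {s t : ℕ} (hst : s < t)
    (hπ : (2 * ((t : ℝ) - s) + 1) * ε < Real.pi) :
    symplSimplex n (rotatedBasis ε s) ⊆ symplDual n (symplSimplex n (rotatedBasis ε t)) ∧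
      symplSimplex n (rotatedBasis ε t) ⊆ symplDual n (symplSimplex n (rotatedBasis ε s)) := by
  have hst' : (s : ℝ) + 1 ≤ t := by exact_mod_cast hst
  have hsin : 0 < Real.sin ε := Real.sin_pos_of_pos_of_lt_pi hε (by nlinarith)
  obtain ⟨hli_s, hspan_s, -⟩ := isSymplecticBasis_rotatedBasis (n := n) hsin s
  obtain ⟨hli_t, hspan_t, -⟩ := isSymplecticBasis_rotatedBasis (n := n) hsin t
  constructor
  · refine symplSimplex_subset_symplDual hli_t hspan_t fun c d hc hd ⟨k, hk⟩ => ?_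
    exact (symplForm_sum_rotatedBasis_pos hε hst hπ (fun i => (hc i).le) hd (hc k) hk).ne'
  · refine symplSimplex_subset_symplDual hli_s hspan_s fun c d hc hd ⟨k, hk⟩ => ?_
    rw [symplForm_swap, neg_ne_zero]
    exact (symplForm_sum_rotatedBasis_pos hε hst hπ hd (fun i => (hc i).le) hk (hc k)).ne'

end

theorem exists_symplSimplices_in_duals_general (n m : ℕ) (hn : 1 ≤ n) :
    ∃ e : Fin m × Bool → (Fin (2 * n) → (Fin (2 * n) → ℝ)),
      (∀ p, IsSymplecticBasis n (e p)) ∧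
      (∀ p q, p ≠ q → symplSimplex n (e p) ≠ symplSimplex n (e q)) ∧
      (∀ p q, p ≠ q → symplSimplex n (e p) ⊆ symplDual n (symplSimplex n (e q))) := by
  rcases Nat.eq_zero_or_pos m with rfl | hm
  · exact ⟨fun _ _ => 0, fun p => p.1.elim0, fun p => p.1.elim0, fun p => p.1.elim0⟩
  let t : Fin m × Bool → Fin (m * 2) := fun p => finProdFinEquiv (p.1, finTwoEquiv.symm p.2)
  have ht : Function.Injective t := by
    intro p q h
    simpa [t, Prod.ext_iff] using h
  set ε := Real.pi / (4 * m)
  have hε : 0 < ε := by positivity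
  have hπ {s s' : ℕ} (h : s' < m * 2) : (2 * ((s' : ℝ) - s) + 1) * ε < Real.pi := by
    have h' : (s' : ℝ) + 1 ≤ m * 2 := by exact_mod_cast h
    rw [mul_div_assoc', div_lt_iff₀ (by positivity)]
    nlinarith [Real.pi_pos, (Nat.cast_nonneg s : (0 : ℝ) ≤ s)]
  have hdual (p q : Fin m × Bool) (hpq : p ≠ q) : symplSimplex n (rotatedBasis ε (t p)) ⊆
      symplDual n (symplSimplex n (rotatedBasis ε (t q))) := by
    rcases (Fin.val_injective.ne (ht.ne hpq)).lt_or_gt with h | h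
    · exact (symplSimplex_rotatedBasis_subset_symplDual hε h (hπ (t q).isLt)).1
    · exact (symplSimplex_rotatedBasis_subset_symplDual hε h (hπ (t p).isLt)).2
  have hsin : 0 < Real.sin ε :=
    Real.sin_pos_of_pos_of_lt_pi hε (by simpa using hπ (s := 0) (s' := 0) (by omega))
  have hsymp (p : Fin m × Bool) : IsSymplecticBasis n (rotatedBasis ε (t p)) :=
    isSymplecticBasis_rotatedBasis hsin _
  exact ⟨fun p => rotatedBasis ε (t p), hsymp, fun p q hpq =>
    symplSimplex_ne_of_subset_symplDual (symplSimplex_nonempty hn (hsymp p).1) (hdual p q hpq),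
    hdual⟩

/-- For every `m ≥ 2` there exist `2m` pairwise distinct symplectic simplices
`B₁⁺, B₁⁻, …, B_m⁺, B_m⁻` in `ℙ(ℝ^{2n})` such that `B ⊆ B′*` for all distinct
`B, B′` among them. -/
theorem exists_symplSimplices_in_duals (n m : ℕ) (hn : 1 ≤ n) (hm : 2 ≤ m) :
    ∃ e : Fin m × Bool → (Fin (2 * n) → (Fin (2 * n) → ℝ)),
      (∀ p, IsSymplecticBasis n (e p)) ∧
      (∀ p q, p ≠ q → symplSimplex n (e p) ≠ symplSimplex n (e q)) ∧
      (∀ p q, p ≠ q → symplSimplex n (e p) ⊆ symplDual n (symplSimplex n (e q))) :=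
  exists_symplSimplices_in_duals_general n m hn
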